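/- arXiv:math/0412472 — 2 statements merged into one kernel-verified Lean document; each statement's English description precedes it below -/
import Mathlib

section
/- Let g : [0, π/2] → ℝ be continuous. Then lim_{a→0⁺} ∫₀^{π/2−a} g(ν) · sin a/(cos ν √(cos²a − sin²ν)) dν = (π/2) g(π/2). -/
open Real Set Filter MeasureTheory
set_option maxHeartbeats 1000000

lemma denom_pos {s : ℝ} (hs : 0 < s) (t : ℝ) : 0 < s^2 * sin t^2 + cos t^2 := by
  rcases eq_or_ne (cos t) 0 with h | h
  · have : sin t ^ 2 = 1 := by nlinarith [sin_sq_add_cos_sq t]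
    rw [h, this]; positivity
  · have h2 : 0 < cos t ^ 2 :=
      lt_of_le_of_ne (sq_nonneg _) (by simpa using (pow_ne_zero 2 h).symm)
    positivity

lemma kernel_cont {s : ℝ} (hs : 0 < s) :
    Continuous (fun t : ℝ => s / (s^2 * sin t^2 + cos t^2)) := by
  apply Continuous.div continuous_const (by fun_prop)
  intro t; exact (denom_pos hs t).ne'

lemma mass {s : ℝ} (hs : 0 < s) :
    ∫ t in (0:ℝ)..(π/2), s / (s^2 * sin t^2 + cos t^2) = π / 2 := by
  have hπ : (0:ℝ) < π := Real.pi_pos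
  have key1 : ∫ t in (0:ℝ)..(π/4), s / (s^2 * sin t^2 + cos t^2) = arctan s := by
    have h1 : ∀ t ∈ uIcc (0:ℝ) (π/4), HasDerivAt (fun u => arctan (s * tan u))
        (s / (s^2 * sin t^2 + cos t^2)) t := by
      intro t ht
      rw [uIcc_of_le (by positivity)] at ht
      have hc : 0 < cos t := by
        apply cos_pos_of_mem_Ioo
        constructor <;> nlinarith [ht.1, ht.2, pi_pos]
      have htan : HasDerivAt tan (1 / cos t ^ 2) t := hasDerivAt_tan hc.ne'
      have h2 : HasDerivAt (fun u => s * tan u) (s * (1 / cos t ^ 2)) t := htan.const_mul s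
      have h3 := (Real.hasDerivAt_arctan (s * tan t)).comp t h2
      refine HasDerivAt.congr_deriv h3 ?_; symm
      rw [tan_eq_sin_div_cos]
      have h4 := sin_sq_add_cos_sq t
      field_simp
      ring_nf
    rw [intervalIntegral.integral_eq_sub_of_hasDerivAt h1
      (((kernel_cont hs).continuousOn).intervalIntegrable)]
    simp [tan_pi_div_four]
  have key2 : ∫ t in (π/4:ℝ)..(π/2), s / (s^2 * sin t^2 + cos t^2)
      = π/2 - arctan s := by
    have h1 : ∀ t ∈ uIcc (π/4:ℝ) (π/2), HasDerivAt (fun u => -arctan (cos u / (s * sin u)))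
        (s / (s^2 * sin t^2 + cos t^2)) t := by
      intro t ht
      rw [uIcc_of_le (by linarith)] at ht
      have hst : 0 < sin t := by
        apply sin_pos_of_pos_of_lt_pi
        · linarith [ht.1]
        · linarith [ht.2]
      have hd : HasDerivAt (fun u => cos u / (s * sin u))
          ((-sin t * (s * sin t) - cos t * (s * cos t)) / (s * sin t)^2) t := by
        exact (Real.hasDerivAt_cos t).div ((Real.hasDerivAt_sin t).const_mul s)
          (by positivity)
      have h3 := ((Real.hasDerivAt_arctan _).comp t hd).neg
      refine HasDerivAt.congr_deriv h3 ?_; symm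
      have h4 := sin_sq_add_cos_sq t
      have h5 : (s * sin t) ≠ 0 := by positivity
      have h6 : (s^2 * sin t^2 + cos t^2) ≠ 0 := (denom_pos hs t).ne'
      field_simp
      linear_combination (-1) * h4
    rw [intervalIntegral.integral_eq_sub_of_hasDerivAt h1
      (((kernel_cont hs).continuousOn).intervalIntegrable)]
    rw [cos_pi_div_two, sin_pi_div_two, cos_pi_div_four, sin_pi_div_four]
    have h2 : Real.sqrt 2 ≠ 0 := by positivity
    have : (Real.sqrt 2 / 2) / (s * (Real.sqrt 2 / 2)) = s⁻¹ := by
      field_simp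
    rw [this, arctan_inv_of_pos hs]
    simp
  have i1 : IntervalIntegrable (fun t : ℝ => s / (s^2 * sin t^2 + cos t^2)) volume 0 (π/4) :=
    ((kernel_cont hs).continuousOn).intervalIntegrable
  have i2 : IntervalIntegrable (fun t : ℝ => s / (s^2 * sin t^2 + cos t^2)) volume (π/4) (π/2) :=
    ((kernel_cont hs).continuousOn).intervalIntegrable
  have := intervalIntegral.integral_add_adjacent_intervals i1 i2
  rw [key1, key2] at this
  linarith [this]

lemma cov (g : ℝ → ℝ) {a : ℝ} (ha : a ∈ Ioo 0 (π/2)) :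
    ∫ ν in (0:ℝ)..(π/2 - a), g ν * (sin a / (cos ν * Real.sqrt (cos a ^ 2 - sin ν ^ 2)))
      = ∫ t in (0:ℝ)..(π/2),
          g (arcsin (cos a * sin t)) * (sin a / ((sin a)^2 * sin t^2 + cos t^2)) := by
  obtain ⟨ha0, ha2⟩ := ha
  have hπ := Real.pi_pos
  have hc0 : 0 < cos a := cos_pos_of_mem_Ioo ⟨by linarith, ha2⟩
  have hc1 : cos a < 1 := by
    have := Real.strictAntiOn_cos ⟨le_refl (0:ℝ), by linarith⟩
      (⟨by linarith, by linarith⟩ : a ∈ Icc 0 π) ha0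
    simpa using this
  have hs0 : 0 < sin a := sin_pos_of_pos_of_lt_pi ha0 (by linarith)
  set c := cos a with hc
  set s := sin a with hsdef
  set f : ℝ → ℝ := fun t => arcsin (c * sin t) with hf
  set f' : ℝ → ℝ := fun t => c * cos t / Real.sqrt (1 - (c * sin t)^2) with hf'
  have hx : ∀ t ∈ Ioo (0:ℝ) (π/2), 0 < c * sin t ∧ c * sin t < 1 := by
    intro t ht
    have h1 : 0 < sin t := sin_pos_of_pos_of_lt_pi ht.1 (by linarith [ht.2])
    have h2 : sin t ≤ 1 := sin_le_one t
    constructor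
    · positivity
    · nlinarith
  have hderiv : ∀ t ∈ Ioo (0:ℝ) (π/2), HasDerivWithinAt f (f' t) (Ioo (0:ℝ) (π/2)) t := by
    intro t ht
    obtain ⟨hx0, hx1⟩ := hx t ht
    have h1 : HasDerivAt (fun u : ℝ => c * sin u) (c * cos t) t :=
      (Real.hasDerivAt_sin t).const_mul c
    have h2 := (Real.hasDerivAt_arcsin (by linarith : c * sin t ≠ -1)
      (by linarith : c * sin t ≠ 1)).comp t h1
    have h3 : (1 / Real.sqrt (1 - (c * sin t) ^ 2)) * (c * cos t) = f' t := by
      rw [hf']; ring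
    rw [← h3]
    exact h2.hasDerivWithinAt
  have hinj : InjOn f (Ioo (0:ℝ) (π/2)) := by
    intro t1 h1 t2 h2 he
    have e1 : sin (f t1) = c * sin t1 :=
      Real.sin_arcsin (by linarith [(hx t1 h1).1]) (le_of_lt (hx t1 h1).2)
    have e2 : sin (f t2) = c * sin t2 :=
      Real.sin_arcsin (by linarith [(hx t2 h2).1]) (le_of_lt (hx t2 h2).2)
    have : c * sin t1 = c * sin t2 := by rw [← e1, ← e2, he]
    have hsin : sin t1 = sin t2 := by
      exact mul_left_cancel₀ hc0.ne' this
    exact Real.injOn_sin ⟨by linarith [h1.1], by linarith [h1.2]⟩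
      ⟨by linarith [h2.1], by linarith [h2.2]⟩ hsin
  have hfc : ContinuousOn f (Icc (0:ℝ) (π/2)) := by
    apply Real.continuous_arcsin.comp_continuousOn
    fun_prop
  have harccos : arcsin c = π/2 - a := by
    rw [hc, ← Real.sin_pi_div_two_sub]
    exact Real.arcsin_sin (by linarith) (by linarith)
  have himg : f '' Ioo (0:ℝ) (π/2) = Ioo (0:ℝ) (π/2 - a) := by
    apply Subset.antisymm
    · rintro - ⟨t, ht, rfl⟩
      obtain ⟨hx0, hx1⟩ := hx t ht
      constructor
      · exact Real.arcsin_pos.mpr hx0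
      · rw [← harccos]
        apply Real.strictMonoOn_arcsin ⟨by linarith, by linarith⟩ ⟨by linarith, by linarith⟩
        have hlt : sin t < 1 := by
          have := Real.strictMonoOn_sin (⟨by linarith [ht.1], by linarith [ht.2]⟩ :
              t ∈ Icc (-(π/2)) (π/2)) ⟨by linarith, le_refl _⟩ ht.2
          simpa using this
        nlinarith
    · have h0 : f 0 = 0 := by simp [hf]
      have h1 : f (π/2) = π/2 - a := by simp [hf, harccos]
      have := intermediate_value_Ioo (by linarith : (0:ℝ) ≤ π/2) hfc
      rw [h0, h1] at this
      exact this
  -- now the change of variables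
  have hmain := MeasureTheory.integral_image_eq_integral_abs_deriv_smul
    measurableSet_Ioo hderiv hinj
    (fun ν => g ν * (s / (cos ν * Real.sqrt (c ^ 2 - sin ν ^ 2))))
  rw [himg] at hmain
  rw [intervalIntegral.integral_of_le (by linarith), intervalIntegral.integral_of_le (by linarith),
    MeasureTheory.integral_Ioc_eq_integral_Ioo, MeasureTheory.integral_Ioc_eq_integral_Ioo,
    hmain]
  apply MeasureTheory.setIntegral_congr_fun measurableSet_Ioo
  intro t ht
  obtain ⟨hx0, hx1⟩ := hx t ht
  have hsint : 0 < sin t := sin_pos_of_pos_of_lt_pi ht.1 (by linarith [ht.2])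
  have hcost : 0 < cos t := cos_pos_of_mem_Ioo ⟨by linarith [ht.1], ht.2⟩
  have e1 : sin (f t) = c * sin t := Real.sin_arcsin (by linarith) (le_of_lt hx1)
  have e2 : cos (f t) = Real.sqrt (1 - (c * sin t)^2) := by
    rw [hf]; exact Real.cos_arcsin _
  have e3 : c ^ 2 - sin (f t) ^ 2 = (c * cos t)^2 := by
    rw [e1]
    have := sin_sq_add_cos_sq t
    ring_nf; nlinarith
  have e4 : Real.sqrt ((c * cos t)^2) = c * cos t := Real.sqrt_sq (by positivity)
  have e5 : 1 - (c * sin t)^2 = s^2 * sin t^2 + cos t^2 := by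
    have h1 := sin_sq_add_cos_sq t
    have h2 := sin_sq_add_cos_sq a
    nlinarith
  have hq : 0 < Real.sqrt (1 - (c * sin t)^2) := by
    apply Real.sqrt_pos.mpr; nlinarith
  have hq2 : Real.sqrt (1 - (c * sin t)^2) * Real.sqrt (1 - (c * sin t)^2)
      = 1 - (c * sin t)^2 := Real.mul_self_sqrt (by nlinarith)
  have habs : |f' t| = f' t := abs_of_nonneg (by rw [hf']; positivity)
  show |f' t| • (g (f t) * (s / (cos (f t) * Real.sqrt (c ^ 2 - sin (f t) ^ 2))))
      = g (f t) * (s / (s^2 * sin t^2 + cos t^2))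
  rw [habs, smul_eq_mul, e3, e4, e2, ← e5, hf']
  field_simp
  rw [Real.sq_sqrt (by nlinarith [mul_pos hx0 hx0])]

theorem stmt_8 (g : ℝ → ℝ) (hg : ContinuousOn g (Icc 0 (π / 2))) :
    Filter.Tendsto
      (fun a : ℝ => ∫ ν in (0:ℝ)..(π / 2 - a),
        g ν * (sin a / (cos ν * Real.sqrt (cos a ^ 2 - sin ν ^ 2))))
      (nhdsWithin 0 (Ioi 0)) (nhds ((π / 2) * g (π / 2))) := by
  have hπ := Real.pi_pos
  have hπ2 : (0:ℝ) < π/2 := by linarith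
  have hp2m : π/2 ∈ Icc (0:ℝ) (π/2) := ⟨by linarith, le_refl _⟩
  set c₀ := g (π/2) with hc₀
  obtain ⟨M, hM⟩ : ∃ M, ∀ y ∈ Icc (0:ℝ) (π/2), |g y| ≤ M :=
    IsCompact.exists_bound_of_continuousOn isCompact_Icc hg
  have hM0 : 0 ≤ M := le_trans (abs_nonneg _) (hM _ hp2m)
  rw [Metric.tendsto_nhdsWithin_nhds]
  intro ε hε
  set ε' : ℝ := ε / π with hε'def
  have hε' : 0 < ε' := by positivity
  -- continuity of g at π/2 within Icc
  obtain ⟨δg, hδg, hgδ⟩ := Metric.continuousWithinAt_iff.mp (hg (π/2) hp2m) ε' hε'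
  -- continuity of arcsin at 1
  obtain ⟨η₀, hη₀, hηp⟩ := Metric.continuousAt_iff.mp
    (Real.continuous_arcsin.continuousAt (x := 1)) δg hδg
  set η : ℝ := min η₀ 1 with hηdef
  have hη : 0 < η := lt_min hη₀ one_pos
  have hη1 : η ≤ 1 := min_le_right _ _
  set τ : ℝ := arcsin (1 - η/2) with hτdef
  have hτ0 : 0 ≤ τ := Real.arcsin_nonneg.mpr (by linarith)
  have hτlt : τ < π/2 := Real.arcsin_lt_pi_div_two.mpr (by linarith)
  have hsinτ : sin τ = 1 - η/2 := Real.sin_arcsin (by linarith) (by linarith)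
  have hcosτ : 0 < cos τ := cos_pos_of_mem_Ioo ⟨by linarith, hτlt⟩
  set δ₃ : ℝ := ε * cos τ^2 / (2*π*(2*M+1)) with hδ₃def
  have hδ₃ : 0 < δ₃ := by positivity
  refine ⟨min (min 1 η) (min (π/2) δ₃), by positivity, ?_⟩
  intro a ha hdista
  rw [Real.dist_eq, sub_zero] at hdista
  have ha0 : 0 < a := ha
  have haa : |a| = a := abs_of_pos ha0
  rw [haa] at hdista
  have ha1 : a < 1 := lt_of_lt_of_le hdista (le_trans (min_le_left _ _) (min_le_left _ _))
  have haη : a < η := lt_of_lt_of_le hdista (le_trans (min_le_left _ _) (min_le_right _ _))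
  have haπ : a < π/2 := lt_of_lt_of_le hdista (le_trans (min_le_right _ _) (min_le_left _ _))
  have haδ₃ : a < δ₃ := lt_of_lt_of_le hdista (le_trans (min_le_right _ _) (min_le_right _ _))
  have hs0 : 0 < sin a := sin_pos_of_pos_of_lt_pi ha0 (by linarith)
  have hsa : sin a ≤ a := Real.sin_le ha0.le
  have hca : 1 - η/2 < cos a := by
    have h1 : 1 - a^2/2 ≤ cos a := Real.one_sub_sq_div_two_le_cos
    nlinarith
  have hca1 : cos a ≤ 1 := cos_le_one a
  have hca0 : 0 < cos a := cos_pos_of_mem_Ioo ⟨by linarith, haπ⟩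
  set s : ℝ := sin a with hsdef
  set G : ℝ → ℝ := fun t => g (arcsin (cos a * sin t)) with hG
  set w : ℝ → ℝ := fun t => s / (s^2 * sin t^2 + cos t^2) with hw
  -- rewrite via change of variables
  rw [cov g ⟨ha0, haπ⟩]
  -- facts about G and w
  have hwc : Continuous w := kernel_cont hs0
  have hwpos : ∀ t, 0 < w t := fun t => div_pos hs0 (denom_pos hs0 t)
  have hGmem : ∀ t ∈ Icc (0:ℝ) (π/2), arcsin (cos a * sin t) ∈ Icc (0:ℝ) (π/2) := by
    intro t ht
    have h1 : 0 ≤ sin t := sin_nonneg_of_nonneg_of_le_pi ht.1 (by linarith [ht.2])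
    exact ⟨Real.arcsin_nonneg.mpr (by positivity), Real.arcsin_le_pi_div_two _⟩
  have hGc : ContinuousOn G (Icc (0:ℝ) (π/2)) := by
    apply hg.comp
    · exact (Real.continuous_arcsin.comp (continuous_const.mul Real.continuous_sin)).continuousOn
    · exact hGmem
  have hGbd : ∀ t ∈ Icc (0:ℝ) (π/2), |G t| ≤ M := fun t ht => hM _ (hGmem t ht)
  have hGwcont : ContinuousOn (fun t => (G t - c₀) * w t) (Icc (0:ℝ) (π/2)) :=
    (hGc.sub continuousOn_const).mul hwc.continuousOn
  have iGw : IntervalIntegrable (fun t => G t * w t) volume 0 (π/2) := by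
    apply ContinuousOn.intervalIntegrable
    rw [uIcc_of_le hπ2.le]
    exact hGc.mul hwc.continuousOn
  have iw : ∀ x y : ℝ, IntervalIntegrable w volume x y :=
    fun x y => hwc.continuousOn.intervalIntegrable
  have isub : ∀ x y : ℝ, x ∈ Icc (0:ℝ) (π/2) → y ∈ Icc (0:ℝ) (π/2) → x ≤ y →
      IntervalIntegrable (fun t => (G t - c₀) * w t) volume x y := by
    intro x y hx hy hxy
    apply ContinuousOn.intervalIntegrable
    rw [uIcc_of_le hxy]
    exact hGwcont.mono (Icc_subset_Icc hx.1 hy.2)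
  -- mass identity
  have hmass : ∫ t in (0:ℝ)..(π/2), w t = π/2 := mass hs0
  -- key rewrite
  have hkey : (∫ t in (0:ℝ)..(π/2), G t * w t) - π/2 * c₀
      = ∫ t in (0:ℝ)..(π/2), (G t - c₀) * w t := by
    have h1 : ∀ t, (G t - c₀) * w t = G t * w t - c₀ * w t := fun t => by ring
    simp_rw [h1]
    rw [intervalIntegral.integral_sub iGw ((iw 0 (π/2)).const_mul c₀),
      intervalIntegral.integral_const_mul, hmass]
    ring
  -- split
  have hsplit : ∫ t in (0:ℝ)..(π/2), (G t - c₀) * w t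
      = (∫ t in (0:ℝ)..τ, (G t - c₀) * w t) + ∫ t in τ..(π/2), (G t - c₀) * w t :=
    (intervalIntegral.integral_add_adjacent_intervals
      (isub 0 τ ⟨le_refl _, hπ2.le⟩ ⟨hτ0, hτlt.le⟩ hτ0)
      (isub τ (π/2) ⟨hτ0, hτlt.le⟩ hp2m hτlt.le)).symm
  -- bound on [0, τ]
  have hA : |∫ t in (0:ℝ)..τ, (G t - c₀) * w t| ≤ τ * (2*M*s/cos τ^2) := by
    calc |∫ t in (0:ℝ)..τ, (G t - c₀) * w t|
        ≤ ∫ t in (0:ℝ)..τ, |(G t - c₀) * w t| :=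
          intervalIntegral.abs_integral_le_integral_abs hτ0
      _ ≤ ∫ t in (0:ℝ)..τ, 2*M*s/cos τ^2 := by
          apply intervalIntegral.integral_mono_on hτ0
          · exact (isub 0 τ ⟨le_refl _, hπ2.le⟩ ⟨hτ0, hτlt.le⟩ hτ0).abs
          · exact intervalIntegrable_const
          · intro t ht
            have htI : t ∈ Icc (0:ℝ) (π/2) := ⟨ht.1, le_trans ht.2 hτlt.le⟩
            have h0 : |G t - c₀| ≤ 2*M := by
              have := hGbd t htI
              have h2 : |c₀| ≤ M := hM _ hp2m
              calc |G t - c₀| ≤ |G t| + |c₀| := abs_sub _ _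
                _ ≤ 2*M := by linarith
            have hcost : cos τ ≤ cos t := by
              apply Real.cos_le_cos_of_nonneg_of_le_pi ht.1 (by linarith [ht.2]) ht.2
            have hwle : w t ≤ s / cos τ^2 := by
              rw [hw]
              apply div_le_div_of_nonneg_left hs0.le (by positivity)
              nlinarith [sq_nonneg (s * sin t)]
            rw [abs_mul, abs_of_nonneg (hwpos t).le]
            calc |G t - c₀| * w t ≤ 2*M * (s/cos τ^2) := by
                  apply mul_le_mul h0 hwle (hwpos t).le (by linarith)
              _ = 2*M*s/cos τ^2 := by ring
      _ = τ * (2*M*s/cos τ^2) := by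
          rw [intervalIntegral.integral_const, smul_eq_mul, sub_zero]
  -- bound on [τ, π/2]
  have hGnear : ∀ t ∈ Icc τ (π/2), |G t - c₀| ≤ ε' := by
    intro t ht
    have htI : t ∈ Icc (0:ℝ) (π/2) := ⟨le_trans hτ0 ht.1, ht.2⟩
    have hsint : sin τ ≤ sin t := by
      apply Real.sin_le_sin_of_le_of_le_pi_div_two (by linarith) ht.2 ht.1
    have hsint1 : sin t ≤ 1 := sin_le_one t
    have hx1 : cos a * sin t ≤ 1 := by nlinarith
    have hxlb : 1 - η < cos a * sin t := by nlinarith [hsinτ]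
    have hdist1 : dist (cos a * sin t) 1 < η₀ := by
      rw [Real.dist_eq, abs_of_nonpos (by linarith)]
      have : η ≤ η₀ := min_le_left _ _
      linarith
    have harc := hηp hdist1
    rw [Real.arcsin_one] at harc
    have hmem := hGmem t htI
    have := hgδ hmem harc
    rw [Real.dist_eq] at this
    exact le_of_lt this
  have hwtail : ∫ t in τ..(π/2), w t ≤ π/2 := by
    have h1 : ∫ t in (0:ℝ)..(π/2), w t
        = (∫ t in (0:ℝ)..τ, w t) + ∫ t in τ..(π/2), w t :=
      (intervalIntegral.integral_add_adjacent_intervals (iw 0 τ) (iw τ (π/2))).symm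
    have h2 : 0 ≤ ∫ t in (0:ℝ)..τ, w t :=
      intervalIntegral.integral_nonneg hτ0 (fun t _ => (hwpos t).le)
    rw [hmass] at h1
    linarith
  have hC : |∫ t in τ..(π/2), (G t - c₀) * w t| ≤ ε' * (π/2) := by
    calc |∫ t in τ..(π/2), (G t - c₀) * w t|
        ≤ ∫ t in τ..(π/2), |(G t - c₀) * w t| :=
          intervalIntegral.abs_integral_le_integral_abs hτlt.le
      _ ≤ ∫ t in τ..(π/2), ε' * w t := by
          apply intervalIntegral.integral_mono_on hτlt.le
          · exact (isub τ (π/2) ⟨hτ0, hτlt.le⟩ hp2m hτlt.le).abs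
          · exact (iw τ (π/2)).const_mul ε'
          · intro t ht
            rw [abs_mul, abs_of_nonneg (hwpos t).le]
            exact mul_le_mul_of_nonneg_right (hGnear t ht) (hwpos t).le
      _ = ε' * ∫ t in τ..(π/2), w t := intervalIntegral.integral_const_mul _ _
      _ ≤ ε' * (π/2) := mul_le_mul_of_nonneg_left hwtail hε'.le
  -- combine
  have hAε : τ * (2*M*s/cos τ^2) < ε/2 := by
    have h1 : τ * (2*M*s/cos τ^2) ≤ (π/2) * (2*M*a/cos τ^2) := by
      apply mul_le_mul hτlt.le _ (by positivity) (by positivity)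
      apply div_le_div_of_nonneg_right _ (by positivity)
      · nlinarith
    have h2 : (π/2) * (2*M*a/cos τ^2) < (π/2) * (2*M*δ₃/cos τ^2 + δ₃/cos τ^2) := by
      have hcos2 : 0 < cos τ^2 := by positivity
      have : 2*M*a/cos τ^2 < 2*M*δ₃/cos τ^2 + δ₃/cos τ^2 := by
        rw [← add_div, div_lt_div_iff₀ (by positivity) (by positivity)]
        nlinarith [mul_lt_mul_of_pos_right (show 2*M*a < 2*M*δ₃ + δ₃ by nlinarith) hcos2]
      nlinarith
    have h3 : (π/2) * (2*M*δ₃/cos τ^2 + δ₃/cos τ^2) = ε/4 := by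
      rw [hδ₃def]
      field_simp
      ring
    linarith
  rw [Real.dist_eq]
  have hfinal : |(∫ t in (0:ℝ)..(π/2), G t * w t) - π/2 * c₀| < ε := by
    rw [hkey, hsplit]
    have hεπ : ε' * (π/2) = ε/2 := by
      rw [hε'def]; field_simp
    calc |(∫ t in (0:ℝ)..τ, (G t - c₀) * w t) + ∫ t in τ..(π/2), (G t - c₀) * w t|
        ≤ |∫ t in (0:ℝ)..τ, (G t - c₀) * w t| + |∫ t in τ..(π/2), (G t - c₀) * w t| :=
          abs_add_le _ _
      _ < ε/2 + ε/2 := by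
          apply add_lt_add_of_lt_of_le (lt_of_le_of_lt hA hAε)
          rw [← hεπ]; exact hC
      _ = ε := by ring
  exact hfinal
end

section
/- Let F : ℝ → ℝ be continuous and π-periodic, and define F̄ = (1/π)∫₀^{2π}F(ψ)dψ. If F(ψ) = F̄/2 + c₁cos2ψ + c₂sin2ψ for some constants c₁, c₂, and F ≥ 0 everywhere, then F is of the form 2∫₀^{2π}cos²(ψ−φ)h(φ)dφ for a continuous π-periodic h, and conversely any F of this latter form with h making the transform nonnegative satisfies F̄ = (1/π)∫₀^{2π}F = 2∫₀^{2π}h. -/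
/-!
Since `cos (ψ - φ) ^ 2 = 1/2 + (cos 2ψ cos 2φ + sin 2ψ sin 2φ) / 2`, twice the transform of `h`
is `∫ h + A cos 2ψ + B sin 2ψ`, where `A`, `B` are the second Fourier moments of `h`. By
orthogonality, `h = F̄/(4π) + (c₁/π) cos 2φ + (c₂/π) sin 2φ` reproduces `F̄/2 + c₁ cos 2ψ + c₂ sin 2ψ`;
conversely, integrating over a period kills the frequency-2 terms, so `∫ F = 2π ∫ h`.
-/

open Real MeasureTheory

lemma integral_harmonic_zero_two_pi {n : ℕ} (hn : n ≠ 0) (b c : ℝ) :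
    ∫ x in (0:ℝ)..2 * π, (b * cos (n * x) + c * sin (n * x)) = 0 := by
  have hn' : (n : ℝ) ≠ 0 := Nat.cast_ne_zero.2 hn
  rw [intervalIntegral.integral_add, intervalIntegral.integral_const_mul,
    intervalIntegral.integral_const_mul,
    intervalIntegral.integral_comp_mul_left (fun x => cos x) hn',
    intervalIntegral.integral_comp_mul_left (fun x => sin x) hn']
  · simp [sin_periodic.nat_mul_eq, cos_nat_mul_two_pi]
  all_goals exact Continuous.intervalIntegrable (by fun_prop) _ _

lemma integral_const_add_harmonic_zero_two_pi {n : ℕ} (hn : n ≠ 0) (a b c : ℝ) :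
    ∫ x in (0:ℝ)..2 * π, (a + (b * cos (n * x) + c * sin (n * x))) = 2 * π * a := by
  rw [intervalIntegral.integral_add intervalIntegrable_const
      (Continuous.intervalIntegrable (by fun_prop) _ _),
    integral_harmonic_zero_two_pi hn, intervalIntegral.integral_const]
  simp [mul_comm]

lemma integral_trig_two_zero_two_pi (a b c : ℝ) :
    ∫ x in (0:ℝ)..2 * π, (a + b * cos (2 * x) + c * sin (2 * x)) = 2 * π * a := by
  simpa [add_assoc] using integral_const_add_harmonic_zero_two_pi two_ne_zero a b c

lemma integral_cos_two_mul_mul_trig_two_zero_two_pi (a b c : ℝ) :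
    ∫ x in (0:ℝ)..2 * π, cos (2 * x) * (a + b * cos (2 * x) + c * sin (2 * x)) = π * b := by
  -- split into harmonics of frequencies 2 and 4, written in the shape of the lemmas above
  have product_to_sum : ∀ x : ℝ, cos (2 * x) * (a + b * cos (2 * x) + c * sin (2 * x)) =
      (b / 2 + (a * cos ((2 : ℕ) * x) + 0 * sin ((2 : ℕ) * x)))
        + ((b / 2) * cos ((4 : ℕ) * x) + (c / 2) * sin ((4 : ℕ) * x)) := by
    intro x
    push_cast
    rw [show (4 : ℝ) * x = 2 * (2 * x) by ring]
    generalize 2 * x = y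
    rw [cos_two_mul, sin_two_mul]
    ring
  simp_rw [product_to_sum]
  rw [intervalIntegral.integral_add (Continuous.intervalIntegrable (by fun_prop) _ _)
      (Continuous.intervalIntegrable (by fun_prop) _ _),
    integral_const_add_harmonic_zero_two_pi two_ne_zero,
    integral_harmonic_zero_two_pi four_ne_zero]
  ring

lemma integral_sin_two_mul_mul_trig_two_zero_two_pi (a b c : ℝ) :
    ∫ x in (0:ℝ)..2 * π, sin (2 * x) * (a + b * cos (2 * x) + c * sin (2 * x)) = π * c := by
  have product_to_sum : ∀ x : ℝ, sin (2 * x) * (a + b * cos (2 * x) + c * sin (2 * x)) =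
      (c / 2 + (0 * cos ((2 : ℕ) * x) + a * sin ((2 : ℕ) * x)))
        + ((-c / 2) * cos ((4 : ℕ) * x) + (b / 2) * sin ((4 : ℕ) * x)) := by
    intro x
    push_cast
    rw [show (4 : ℝ) * x = 2 * (2 * x) by ring]
    generalize 2 * x = y
    rw [cos_two_mul, sin_two_mul, cos_sq']
    ring
  simp_rw [product_to_sum]
  rw [intervalIntegral.integral_add (Continuous.intervalIntegrable (by fun_prop) _ _)
      (Continuous.intervalIntegrable (by fun_prop) _ _),
    integral_const_add_harmonic_zero_two_pi two_ne_zero,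
    integral_harmonic_zero_two_pi four_ne_zero]
  ring

lemma two_mul_integral_cos_sub_sq_mul {h : ℝ → ℝ} {a b : ℝ} (hh : IntervalIntegrable h volume a b)
    (ψ : ℝ) :
    2 * ∫ φ in a..b, cos (ψ - φ) ^ 2 * h φ =
      (∫ φ in a..b, h φ) + cos (2 * ψ) * (∫ φ in a..b, cos (2 * φ) * h φ)
        + sin (2 * ψ) * ∫ φ in a..b, sin (2 * φ) * h φ := by
  have double_angle : ∀ φ, cos (ψ - φ) ^ 2 * h φ =
      (1 / 2) * h φ + (cos (2 * ψ) / 2) * (cos (2 * φ) * h φ)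
        + (sin (2 * ψ) / 2) * (sin (2 * φ) * h φ) := by
    intro φ
    rw [cos_sq, show 2 * (ψ - φ) = 2 * ψ - 2 * φ by ring, cos_sub]
    ring
  have hcos : IntervalIntegrable (fun φ => cos (2 * φ) * h φ) volume a b :=
    hh.continuousOn_mul (by fun_prop)
  have hsin : IntervalIntegrable (fun φ => sin (2 * φ) * h φ) volume a b :=
    hh.continuousOn_mul (by fun_prop)
  simp_rw [double_angle]
  rw [intervalIntegral.integral_add ((hh.const_mul _).add (hcos.const_mul _)) (hsin.const_mul _),
    intervalIntegral.integral_add (hh.const_mul _) (hcos.const_mul _),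
    intervalIntegral.integral_const_mul, intervalIntegral.integral_const_mul,
    intervalIntegral.integral_const_mul]
  ring

theorem stmt_14_general (F : ℝ → ℝ)
    (Fbar : ℝ) (hFbar : Fbar = (1 / π) * ∫ ψ in (0:ℝ)..(2 * π), F ψ) :
    ((∃ c₁ c₂ : ℝ, ∀ ψ : ℝ, F ψ = Fbar / 2 + c₁ * cos (2 * ψ) + c₂ * sin (2 * ψ)) →
        (∀ ψ : ℝ, 0 ≤ F ψ) →
        ∃ h : ℝ → ℝ, Continuous h ∧ (∀ φ : ℝ, h (φ + π) = h φ) ∧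
          ∀ ψ : ℝ, F ψ = 2 * ∫ φ in (0:ℝ)..(2 * π), cos (ψ - φ) ^ 2 * h φ) ∧
    (∀ h : ℝ → ℝ, Continuous h → (∀ φ : ℝ, h (φ + π) = h φ) →
        (∀ ψ : ℝ, 0 ≤ ∫ φ in (0:ℝ)..(2 * π), cos (ψ - φ) ^ 2 * h φ) →
        (∀ ψ : ℝ, F ψ = 2 * ∫ φ in (0:ℝ)..(2 * π), cos (ψ - φ) ^ 2 * h φ) →
        Fbar = 2 * ∫ φ in (0:ℝ)..(2 * π), h φ) := by
  constructor
  · rintro ⟨c₁, c₂, hF⟩ -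
    refine ⟨fun φ => Fbar / (4 * π) + c₁ / π * cos (2 * φ) + c₂ / π * sin (2 * φ),
      by fun_prop, fun φ => by simp [mul_add, cos_add_two_pi, sin_add_two_pi], fun ψ => ?_⟩
    rw [two_mul_integral_cos_sub_sq_mul (Continuous.intervalIntegrable (by fun_prop) _ _),
      integral_trig_two_zero_two_pi, integral_cos_two_mul_mul_trig_two_zero_two_pi,
      integral_sin_two_mul_mul_trig_two_zero_two_pi, hF]
    field_simp
    ring
  · intro h hh _ _ hF
    have hF' : F = fun ψ => (∫ φ in (0:ℝ)..2 * π, h φ)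
        + (∫ φ in (0:ℝ)..2 * π, cos (2 * φ) * h φ) * cos (2 * ψ)
        + (∫ φ in (0:ℝ)..2 * π, sin (2 * φ) * h φ) * sin (2 * ψ) := by
      funext ψ
      rw [hF, two_mul_integral_cos_sub_sq_mul (hh.intervalIntegrable _ _)]
      ring
    rw [hFbar, hF', integral_trig_two_zero_two_pi]
    field_simp

theorem stmt_14 (F : ℝ → ℝ) (hF : Continuous F)
    (hper : ∀ ψ : ℝ, F (ψ + π) = F ψ)
    (Fbar : ℝ) (hFbar : Fbar = (1 / π) * ∫ ψ in (0:ℝ)..(2 * π), F ψ) :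
    ((∃ c₁ c₂ : ℝ, ∀ ψ : ℝ, F ψ = Fbar / 2 + c₁ * cos (2 * ψ) + c₂ * sin (2 * ψ)) →
        (∀ ψ : ℝ, 0 ≤ F ψ) →
        ∃ h : ℝ → ℝ, Continuous h ∧ (∀ φ : ℝ, h (φ + π) = h φ) ∧
          ∀ ψ : ℝ, F ψ = 2 * ∫ φ in (0:ℝ)..(2 * π), cos (ψ - φ) ^ 2 * h φ) ∧
    (∀ h : ℝ → ℝ, Continuous h → (∀ φ : ℝ, h (φ + π) = h φ) →
        (∀ ψ : ℝ, 0 ≤ ∫ φ in (0:ℝ)..(2 * π), cos (ψ - φ) ^ 2 * h φ) →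
        (∀ ψ : ℝ, F ψ = 2 * ∫ φ in (0:ℝ)..(2 * π), cos (ψ - φ) ^ 2 * h φ) →
        Fbar = 2 * ∫ φ in (0:ℝ)..(2 * π), h φ) :=
  stmt_14_general F Fbar hFbar
end
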